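/- Let 𝔤 be the 3-dimensional real Lie algebra with basis {e₁,e₂,e₃} and nonzero brackets [e₁,e₂]=e₂, [e₁,e₃]=a e₃, where a is a real number with -1 ≤ a < 1. Then the space of derivations of 𝔤, as matrices in this basis, equals the set of matrices [[0,0,0],[x₂₁,x₂₂,0],[x₃₁,0,x₃₃]] with x₂₁,x₂₂,x₃₁,x₃₃ ∈ ℝ. -/
import Mathlib


open Matrix

/-- The bracket of 𝔯_{3,a} on ℝ³ : [e₁,e₂]=e₂, [e₁,e₃]=a e₃, [e₂,e₃]=0. -/
def br3a (a : ℝ) (x y : Fin 3 → ℝ) : Fin 3 → ℝ :=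
  ![0,
    x 0 * y 1 - x 1 * y 0,
    a * (x 0 * y 2 - x 2 * y 0)]

/-- The derivations of 𝔯_{3,a} (-1 ≤ a < 1) are exactly the matrices
    [[0,0,0],[x₂₁,x₂₂,0],[x₃₁,0,x₃₃]]. -/
theorem derivations_r3a (a : ℝ) (ha₁ : -1 ≤ a) (ha₂ : a < 1) :
    {D : Matrix (Fin 3) (Fin 3) ℝ |
      ∀ x y, D.mulVec (br3a a x y) = br3a a (D.mulVec x) y + br3a a x (D.mulVec y)} =
    {D : Matrix (Fin 3) (Fin 3) ℝ |
      ∃ x21 x22 x31 x33 : ℝ, D = !![0,0,0; x21,x22,0; x31,0,x33]} := by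
  ext D
  simp only [Set.mem_setOf_eq]
  constructor
  · intro h
    have h01 := h ![1,0,0] ![0,1,0]
    have h02 := h ![1,0,0] ![0,0,1]
    have h12 := h ![0,1,0] ![0,0,1]
    have e1 := congrFun h01 0
    have e2 := congrFun h01 1
    have e3 := congrFun h01 2
    have e4 := congrFun h02 1
    have e5 := congrFun h12 1
    simp [br3a, mulVec, dotProduct, Fin.sum_univ_three] at e1 e2 e3 e4 e5
    have hD00 : D 0 0 = 0 := by linarith
    have hD01 : D 0 1 = 0 := e1
    have hD21 : D 2 1 = 0 := by
      have : (1 - a) * D 2 1 = 0 := by linarith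
      rcases mul_eq_zero.mp this with h' | h'
      · linarith
      · exact h'
    have hD12 : D 1 2 = 0 := by
      have : (1 - a) * D 1 2 = 0 := by linarith
      rcases mul_eq_zero.mp this with h' | h'
      · linarith
      · exact h'
    have hD02 : D 0 2 = 0 := by linarith
    refine ⟨D 1 0, D 1 1, D 2 0, D 2 2, ?_⟩
    ext i j
    fin_cases i <;> fin_cases j <;>
      simp [hD00, hD01, hD02, hD12, hD21]
  · rintro ⟨x21, x22, x31, x33, rfl⟩ x y
    funext i
    fin_cases i <;>
      simp [br3a, mulVec, dotProduct, Fin.sum_univ_three] <;> ring
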